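/- Let n be a positive integer and let a_1, …, a_n be positive integers with a_1 + a_2 + … + a_n = n². Suppose {1, 2, …, 2n} is partitioned into n pairs (s_i, t_i) with s_i < t_i and t_i − s_i = a_i for i = 1, …, n. Then {s_1, …, s_n} = {1, 2, …, n} and {t_1, …, t_n} = {n+1, n+2, …, 2n}. -/

import Mathlib

/-!
Summing all endpoints gives `∑ sᵢ + ∑ tᵢ = n(2n + 1)`, and summing the differences gives
`∑ tᵢ - ∑ sᵢ = n²`, so `∑ sᵢ = n(n + 1)/2`. But `n` distinct positive integers sum to at least
`1 + ⋯ + n`, with equality only for `{1, …, n}`. Hence the `sᵢ` are `1, …, n` and the `tᵢ` are the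
remaining numbers `n + 1, …, 2n`.
-/

/-- The multiset of all endpoints of the pairs `(s i, t i)`. -/
def pairsMultiset (n : ℕ) (s t : Fin n → ℕ) : Multiset ℕ :=
  (Finset.univ : Finset (Fin n)).val.bind fun i => {s i, t i}

/-- The pairs `(s i, t i)` form a partition of `{1, 2, …, 2n}`. -/
def IsPartitionOfIcc (n : ℕ) (s t : Fin n → ℕ) : Prop :=
  pairsMultiset n s t = Multiset.map (· + 1) (Multiset.range (2 * n))

open Finset Function

lemma Finset.sum_Icc_one_id_mul_two (k : ℕ) : (∑ i ∈ Icc 1 k, i) * 2 = k * (k + 1) := by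
  induction k with
  | zero => simp
  | succ k ih => rw [sum_Icc_succ_top (by omega), add_mul, ih]; ring

/-- Exchange argument: the `d` elements of `S` outside `[1, #S]` all exceed `#S`, while the `d`
elements of `[1, #S]` missing from `S` are at most `#S`, so `∑ S ≥ ∑ [1, #S] + d`. -/
lemma Finset.eq_Icc_one_card_of_sum_le {S : Finset ℕ} (hpos : ∀ x ∈ S, 0 < x)
    (hsum : ∑ x ∈ S, x ≤ ∑ x ∈ Icc 1 #S, x) : S = Icc 1 #S := by
  set I := Icc 1 #S
  have hcardI : #I = #S := by simp [I]
  have hcard : #(S \ I) = #(I \ S) := card_sdiff_comm hcardI.symm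
  have hout : #(S \ I) * (#S + 1) ≤ ∑ x ∈ S \ I, x := by
    rw [← smul_eq_mul]
    refine card_nsmul_le_sum _ _ _ fun x hx => ?_
    have ⟨hxS, hxI⟩ := mem_sdiff.1 hx
    have := hpos x hxS
    simp only [I, mem_Icc, not_and_or, not_le] at hxI
    omega
  have hin : ∑ x ∈ I \ S, x ≤ #(I \ S) * #S := by
    rw [← smul_eq_mul]
    exact sum_le_card_nsmul _ _ _ fun x hx => (mem_Icc.1 (mem_sdiff.1 hx).1).2
  have hS := sum_inter_add_sum_sdiff S I id
  have hI := sum_inter_add_sum_sdiff I S id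
  rw [inter_comm] at hI
  simp only [id] at hS hI
  have hempty : #(S \ I) = 0 := by nlinarith
  exact eq_of_subset_of_card_le (sdiff_eq_empty_iff_subset.1 (card_eq_zero.1 hempty)) hcardI.le

lemma Multiset.map_add_one_range (m : ℕ) :
    Multiset.map (· + 1) (Multiset.range m) = (Finset.Icc 1 m).val := by
  refine (Multiset.Nodup.ext ((Multiset.nodup_range m).map (add_left_injective 1))
    (Finset.Icc 1 m).nodup).2 fun x => ?_
  simp only [Multiset.mem_map, Multiset.mem_range, Finset.mem_val, Finset.mem_Icc]
  exact ⟨by rintro ⟨k, hk, rfl⟩; omega, fun hx => ⟨x - 1, by omega, by omega⟩⟩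

lemma pairsMultiset_eq_map_add_map (n : ℕ) (s t : Fin n → ℕ) :
    pairsMultiset n s t = univ.val.map s + univ.val.map t := by
  simp only [pairsMultiset, Multiset.insert_eq_cons, Multiset.bind_cons, Multiset.bind_singleton]

namespace IsPartitionOfIcc

variable {n : ℕ} {s t : Fin n → ℕ}

lemma map_add_map (h : IsPartitionOfIcc n s t) :
    univ.val.map s + univ.val.map t = (Icc 1 (2 * n)).val := by
  rw [← pairsMultiset_eq_map_add_map, h, Multiset.map_add_one_range]

lemma nodup (h : IsPartitionOfIcc n s t) :
    (univ.val.map s).Nodup ∧ (univ.val.map t).Nodup ∧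
      Disjoint (univ.val.map s) (univ.val.map t) :=
  Multiset.nodup_add.1 (h.map_add_map ▸ (Icc 1 (2 * n)).nodup)

lemma injective_left (h : IsPartitionOfIcc n s t) : Injective s := fun i j hij =>
  Multiset.inj_on_of_nodup_map h.nodup.1 i (mem_univ i) j (mem_univ j) hij

lemma injective_right (h : IsPartitionOfIcc n s t) : Injective t := fun i j hij =>
  Multiset.inj_on_of_nodup_map h.nodup.2.1 i (mem_univ i) j (mem_univ j) hij

lemma disjoint_image (h : IsPartitionOfIcc n s t) : Disjoint (univ.image s) (univ.image t) := by
  rw [disjoint_left]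
  rintro _ hs ht
  rw [mem_image] at hs ht
  obtain ⟨i, -, rfl⟩ := hs
  obtain ⟨j, -, hj⟩ := ht
  exact Multiset.disjoint_left.1 h.nodup.2.2 (Multiset.mem_map_of_mem s (mem_univ_val i))
    (hj ▸ Multiset.mem_map_of_mem t (mem_univ_val j))

lemma image_union_image (h : IsPartitionOfIcc n s t) :
    univ.image s ∪ univ.image t = Icc 1 (2 * n) := by
  ext x
  rw [← Finset.mem_val (s := Icc 1 (2 * n)), ← h.map_add_map, Multiset.mem_add, mem_union]
  simp only [mem_image, Multiset.mem_map, mem_univ_val, mem_univ, true_and]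

lemma mem_Icc_left (h : IsPartitionOfIcc n s t) (i : Fin n) : s i ∈ Icc 1 (2 * n) :=
  h.image_union_image ▸ mem_union_left _ (mem_image_of_mem s (mem_univ i))

lemma sum_add_sum (h : IsPartitionOfIcc n s t) :
    ∑ i, s i + ∑ i, t i = ∑ x ∈ Icc 1 (2 * n), x := by
  rw [← h.image_union_image, sum_union h.disjoint_image,
    sum_image h.injective_left.injOn, sum_image h.injective_right.injOn]

lemma image_right_eq_sdiff (h : IsPartitionOfIcc n s t) :
    univ.image t = Icc 1 (2 * n) \ univ.image s := by
  rw [← h.image_union_image, union_sdiff_cancel_left h.disjoint_image]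

end IsPartitionOfIcc

theorem stmt14_general (n : ℕ) (a s t : Fin n → ℕ)
    (ha_sum : ∑ i, a i = n ^ 2)
    (hpart : IsPartitionOfIcc n s t) (hst : ∀ i, s i < t i)
    (hdiff : ∀ i, t i - s i = a i) :
    Finset.image s Finset.univ = Finset.Icc 1 n ∧
      Finset.image t Finset.univ = Finset.Icc (n + 1) (2 * n) := by
  have hcard : #(univ.image s) = n := by simp [card_image_of_injective _ hpart.injective_left]
  have hsum_t : ∑ i, t i = ∑ i, s i + n ^ 2 := by
    rw [← ha_sum, ← sum_add_distrib]
    exact sum_congr rfl fun i _ => by have := hst i; have := hdiff i; omega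
  have hS : univ.image s = Icc 1 n := by
    refine (eq_Icc_one_card_of_sum_le ?_ ?_).trans (by rw [hcard])
    · simp only [mem_image, mem_univ, true_and]
      rintro _ ⟨i, rfl⟩
      exact (mem_Icc.1 (hpart.mem_Icc_left i)).1
    · rw [hcard, sum_image hpart.injective_left.injOn]
      have := hpart.sum_add_sum
      have := sum_Icc_one_id_mul_two n
      have := sum_Icc_one_id_mul_two (2 * n)
      nlinarith
  refine ⟨hS, ?_⟩
  rw [hpart.image_right_eq_sdiff, hS]
  ext x
  simp only [mem_sdiff, mem_Icc]
  omega

theorem stmt14 (n : ℕ) (hn : 0 < n) (a s t : Fin n → ℕ)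
    (ha_pos : ∀ i, 0 < a i) (ha_sum : ∑ i, a i = n ^ 2)
    (hpart : IsPartitionOfIcc n s t) (hst : ∀ i, s i < t i)
    (hdiff : ∀ i, t i - s i = a i) :
    Finset.image s Finset.univ = Finset.Icc 1 n ∧
      Finset.image t Finset.univ = Finset.Icc (n + 1) (2 * n) :=
  stmt14_general n a s t ha_sum hpart hst hdiff
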